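/- For integers n ≥ k ≥ 1, the Ward-Lah numbers satisfy the integer-coefficient triangular recurrence W(n,k) = 2(n+k-1) · W(n-1,k-1) + (n+2k-1) · W(n-1,k). -/

import Mathlib

def wardLah (n k : ℕ) : ℚ :=
  if k = 0 then (if n = 0 then 1 else 0)
  else if n < k then 0
  else (Nat.factorial (n + k) : ℚ) / (Nat.factorial k) * (Nat.choose (n - 1) (k - 1))

/-! Away from the boundary `W(n+1, k+1) = (n+k+2)!/(k+1)! · C(n, k)`, with `C(n, k) = 0` for
`k > n` covering the zero region. Substituting this into the recurrence for `W(n+2, k+2)`,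
splitting `C(n+1, k+1) = C(n, k) + C(n, k+1)` by Pascal's rule and clearing the common factor
`(n+k+3)!/(k+2)!` leaves the absorption identity `(k+1) · C(n, k+1) = (n-k) · C(n, k)`. -/

open Nat

/-- Unlike `Nat.choose_succ_right_eq`, this needs no truncated subtraction, hence no `k ≤ n`. -/
theorem cast_succ_mul_choose_succ_right {R : Type*} [CommRing R] (n k : ℕ) :
    ((k : R) + 1) * (n.choose (k + 1) : R) = ((n : R) - k) * (n.choose k : R) := by
  have pascal : ((n + 1).choose (k + 1) : R) = n.choose k + n.choose (k + 1) := by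
    rw [choose_succ_succ', cast_add]
  have absorb : ((n : R) + 1) * n.choose k = (n + 1).choose (k + 1) * ((k : R) + 1) := by
    simpa using congrArg (Nat.cast : ℕ → R) (add_one_mul_choose_eq n k)
  linear_combination -absorb - ((k : R) + 1) * pascal

theorem wardLah_zero_right (n : ℕ) : wardLah n 0 = if n = 0 then 1 else 0 := by
  simp [wardLah]

theorem wardLah_zero_succ (k : ℕ) : wardLah 0 (k + 1) = 0 := by
  simp [wardLah]

theorem wardLah_succ_succ (n k : ℕ) :
    wardLah (n + 1) (k + 1) = ((n + k + 2)! : ℚ) / (k + 1)! * n.choose k := by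
  rcases lt_or_ge n k with hnk | hkn
  · simp [wardLah, hnk, choose_eq_zero_of_lt hnk]
  · simp [wardLah, show ¬ n < k by omega, show n + 1 + (k + 1) = n + k + 2 by omega]

theorem wardLah_succ_succ_rec (n k : ℕ) :
    wardLah (n + 1) (k + 1) =
      2 * ((n : ℚ) + k + 1) * wardLah n k + ((n : ℚ) + 2 * k + 2) * wardLah n (k + 1) := by
  rcases n with _ | n <;> rcases k with _ | k
  · norm_num [wardLah_succ_succ, wardLah_zero_right, wardLah_zero_succ]
  · simp [wardLah_succ_succ, wardLah_zero_succ]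
  · simp only [wardLah_succ_succ, wardLah_zero_right, choose_zero_right, factorial_succ]
    push_cast
    ring
  · rw [wardLah_succ_succ, wardLah_succ_succ, wardLah_succ_succ, choose_succ_succ',
      show n + 1 + (k + 1) + 2 = (n + k + 2) + 1 + 1 by omega,
      show n + (k + 1) + 2 = (n + k + 2) + 1 by omega]
    have key := cast_succ_mul_choose_succ_right (R := ℚ) n k
    simp only [factorial_succ]
    push_cast
    field_simp
    linear_combination -((n : ℚ) + k + 3) * key

theorem wardLah_integer_triangular_rec (n k : ℕ) (hk : 1 ≤ k) (hkn : k ≤ n) :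
    wardLah n k =
      2 * ((n : ℚ) + k - 1) * wardLah (n - 1) (k - 1) +
        ((n : ℚ) + 2 * k - 1) * wardLah (n - 1) k := by
  obtain ⟨j, rfl⟩ : ∃ j, k = j + 1 := ⟨k - 1, by omega⟩
  obtain ⟨m, rfl⟩ : ∃ m, n = m + 1 := ⟨n - 1, by omega⟩
  rw [wardLah_succ_succ_rec, Nat.add_sub_cancel, Nat.add_sub_cancel]
  push_cast
  ring
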